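/- (Theorem 1, Converged Soft Policy is Optimal) Let π* be a policy and Q* a fixed point of the soft Bellman operator T^{π*} such that π*(s)(a) = exp(Q*(s,a)) / ∑_{a'} exp(Q*(s,a')) for all s, a (i.e., π* is the softmax of its own soft Q-function). Then for every policy π and every fixed point Q^π of T^π, one has Q*(s,a) ≥ Q^π(s,a) for all (s,a). -/

import Mathlib

/-!
The softmax policy `π*` is the maximiser of the entropy-regularised value
`∑ₐ π(a) q(a) + H(π)` over distributions `π`, the maximum being `log ∑ₐ exp q(a)` (Gibbs).
Hence if `Q^π ≤ Q* + M` everywhere, the soft values satisfy `V^π ≤ V* + M`, and the two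
Bellman equations give `Q^π ≤ Q* + γ M`. Taking `M` to be the largest gap `max (Q^π - Q*)`
yields `M ≤ γ M`, so `M ≤ 0` because `γ < 1`.
-/

open Real Finset Filter

variable {S A : Type*}

noncomputable def softBellman [Fintype S] [Fintype A]
    (r : S × A → ℝ) (p : S × A → S → ℝ) (γ : ℝ) (pol : S → A → ℝ)
    (Q : S × A → ℝ) : S × A → ℝ :=
  fun sa => r sa + γ * ∑ s' : S, p sa s' *
    ∑ a' : A, (pol s' a' * Q (s', a') + Real.negMulLog (pol s' a'))

lemma negMulLog_add_mul_log_le {x y : ℝ} (hx : 0 ≤ x) (hy : 0 < y) :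
    negMulLog x + x * log y ≤ y - x := by
  have hsplit : negMulLog x = x / y * negMulLog y + y * negMulLog (x / y) := by
    rw [← negMulLog_mul, mul_div_cancel₀ x hy.ne']
  have hlog : x / y * negMulLog y = -(x * log y) := by
    rw [negMulLog]
    field_simp
  have h := mul_le_mul_of_nonneg_left (negMulLog_le_one_sub_self (div_nonneg hx hy.le)) hy.le
  rw [mul_one_sub, mul_div_cancel₀ x hy.ne'] at h
  linarith

lemma Finset.sum_mul_le_of_le {ι : Type*} [Fintype ι] {w x : ι → ℝ} {M : ℝ}
    (hw0 : ∀ i, 0 ≤ w i) (hw1 : ∑ i, w i = 1) (hx : ∀ i, x i ≤ M) :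
    ∑ i, w i * x i ≤ M :=
  calc ∑ i, w i * x i ≤ ∑ i, w i * M := by gcongr with i; exacts [hw0 i, hx i]
    _ = M := by rw [← Finset.sum_mul, hw1, one_mul]

lemma nonpos_of_forall_le_mul_of_forall_le {ι : Type*} [Finite ι] {d : ι → ℝ} {γ : ℝ}
    (hγ : γ < 1) (h : ∀ M, (∀ i, d i ≤ M) → ∀ i, d i ≤ γ * M) (i : ι) : d i ≤ 0 := by
  have : Nonempty ι := ⟨i⟩
  obtain ⟨i₀, hi₀⟩ := Finite.exists_max d
  have hmax : d i₀ ≤ γ * d i₀ := h (d i₀) hi₀ i₀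
  have : d i₀ ≤ 0 := by nlinarith
  exact (hi₀ i).trans this

section Gibbs

variable {ι : Type*} [Fintype ι]

noncomputable def softmax (q : ι → ℝ) (i : ι) : ℝ := exp (q i) / ∑ j, exp (q j)

noncomputable def softValue (w q : ι → ℝ) : ℝ := ∑ i, (w i * q i + negMulLog (w i))

lemma softValue_sub_softValue (w q q' : ι → ℝ) :
    softValue w q - softValue w q' = ∑ i, w i * (q i - q' i) := by
  rw [softValue, softValue, ← Finset.sum_sub_distrib]
  exact Finset.sum_congr rfl fun i _ => by ring

variable [Nonempty ι]

lemma sum_exp_pos (q : ι → ℝ) : 0 < ∑ i, exp (q i) :=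
  Finset.sum_pos (fun _ _ => exp_pos _) Finset.univ_nonempty

lemma softValue_le_log_sum_exp {w : ι → ℝ} (hw0 : ∀ i, 0 ≤ w i) (hw1 : ∑ i, w i = 1)
    (q : ι → ℝ) : softValue w q ≤ log (∑ i, exp (q i)) := by
  set Z := ∑ i, exp (q i)
  have hZ : 0 < Z := sum_exp_pos q
  have hpointwise : ∀ i, w i * q i + negMulLog (w i) ≤ exp (q i) / Z - w i + w i * log Z := by
    intro i
    have h := negMulLog_add_mul_log_le (hw0 i) (div_pos (exp_pos (q i)) hZ)
    rw [log_div (exp_ne_zero _) hZ.ne', log_exp] at h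
    linarith
  calc softValue w q ≤ ∑ i, (exp (q i) / Z - w i + w i * log Z) :=
        Finset.sum_le_sum fun i _ => hpointwise i
    _ = log Z := by
        rw [Finset.sum_add_distrib, Finset.sum_sub_distrib, ← Finset.sum_div, ← Finset.sum_mul,
          hw1, div_self hZ.ne']
        ring

lemma sum_softmax (q : ι → ℝ) : ∑ i, softmax q i = 1 := by
  simp only [softmax, ← Finset.sum_div]
  exact div_self (sum_exp_pos q).ne'

lemma softValue_softmax (q : ι → ℝ) : softValue (softmax q) q = log (∑ i, exp (q i)) := by
  set Z := ∑ i, exp (q i)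
  have hZ : 0 < Z := sum_exp_pos q
  have hpointwise : ∀ i, softmax q i * q i + negMulLog (softmax q i) = softmax q i * log Z := by
    intro i
    rw [negMulLog, softmax, log_div (exp_ne_zero _) hZ.ne', log_exp]
    ring
  rw [softValue, Finset.sum_congr rfl fun i _ => hpointwise i, ← Finset.sum_mul, sum_softmax,
    one_mul]

lemma softValue_sub_softValue_softmax_le {w q q' : ι → ℝ} {M : ℝ} (hw0 : ∀ i, 0 ≤ w i)
    (hw1 : ∑ i, w i = 1) (h : ∀ i, q i - q' i ≤ M) :
    softValue w q - softValue (softmax q') q' ≤ M := by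
  have hgibbs : softValue w q' ≤ softValue (softmax q') q' :=
    softValue_softmax q' ▸ softValue_le_log_sum_exp hw0 hw1 q'
  have hgap : softValue w q - softValue w q' ≤ M :=
    softValue_sub_softValue w q q' ▸ Finset.sum_mul_le_of_le hw0 hw1 h
  linarith

end Gibbs

lemma softBellman_sub_softBellman_le [Fintype S] [Fintype A] {p : S × A → S → ℝ}
    (hp0 : ∀ sa s', 0 ≤ p sa s') (hp1 : ∀ sa, ∑ s' : S, p sa s' = 1) (r : S × A → ℝ)
    {γ : ℝ} (hγ0 : 0 ≤ γ) {pol pol' : S → A → ℝ} {Q Q' : S × A → ℝ} {M : ℝ}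
    (h : ∀ s, softValue (pol s) (fun a => Q (s, a)) - softValue (pol' s) (fun a => Q' (s, a)) ≤ M)
    (sa : S × A) : softBellman r p γ pol Q sa - softBellman r p γ pol' Q' sa ≤ γ * M := by
  have hdiff : softBellman r p γ pol Q sa - softBellman r p γ pol' Q' sa = γ * ∑ s, p sa s *
      (softValue (pol s) (fun a => Q (s, a)) - softValue (pol' s) (fun a => Q' (s, a))) := by
    simp only [softBellman, softValue, mul_sub, Finset.sum_sub_distrib]
    ring
  rw [hdiff]
  exact mul_le_mul_of_nonneg_left (Finset.sum_mul_le_of_le (hp0 sa) (hp1 sa) h) hγ0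

theorem converged_soft_policy_optimal_general
    [Fintype S] [Fintype A] [Nonempty A]
    (p : S × A → S → ℝ) (hp0 : ∀ sa s', 0 ≤ p sa s') (hp1 : ∀ sa, ∑ s' : S, p sa s' = 1)
    (r : S × A → ℝ) (γ : ℝ) (hγ0 : 0 ≤ γ) (hγ1 : γ < 1)
    (polStar : S → A → ℝ)
    (Qstar : S × A → ℝ) (hQstar : softBellman r p γ polStar Qstar = Qstar)
    (hsoftmax : ∀ s a,
      polStar s a = Real.exp (Qstar (s, a)) / ∑ a' : A, Real.exp (Qstar (s, a'))) :
    ∀ pol : S → A → ℝ, (∀ s a, 0 ≤ pol s a) → (∀ s, ∑ a : A, pol s a = 1) →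
      ∀ Qpol : S × A → ℝ, softBellman r p γ pol Qpol = Qpol →
        ∀ sa, Qpol sa ≤ Qstar sa := by
  intro pol hpol0 hpol1 Qpol hQpol
  have hpolStar : ∀ s, polStar s = softmax fun a => Qstar (s, a) := fun s => funext (hsoftmax s)
  have hgap : ∀ M, (∀ sa, Qpol sa - Qstar sa ≤ M) → ∀ sa, Qpol sa - Qstar sa ≤ γ * M := by
    intro M hM sa
    rw [← congrFun hQpol sa, ← congrFun hQstar sa]
    refine softBellman_sub_softBellman_le hp0 hp1 r hγ0 (fun s => ?_) sa
    rw [hpolStar]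
    exact softValue_sub_softValue_softmax_le (hpol0 s) (hpol1 s) fun a => hM (s, a)
  exact fun sa => sub_nonpos.mp (nonpos_of_forall_le_mul_of_forall_le hγ1 hgap sa)

/-- Theorem 1 (Converged Soft Policy is Optimal): if `pol*` is the softmax of its own
soft Q-function, then its soft Q-function dominates the soft Q-function of every policy. -/
theorem converged_soft_policy_optimal
    [Fintype S] [Fintype A] [Nonempty S] [Nonempty A]
    (p : S × A → S → ℝ) (hp0 : ∀ sa s', 0 ≤ p sa s') (hp1 : ∀ sa, ∑ s' : S, p sa s' = 1)
    (r : S × A → ℝ) (γ : ℝ) (hγ0 : 0 ≤ γ) (hγ1 : γ < 1)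
    (polStar : S → A → ℝ) (hpolStar0 : ∀ s a, 0 ≤ polStar s a)
    (hpolStar1 : ∀ s, ∑ a : A, polStar s a = 1)
    (Qstar : S × A → ℝ) (hQstar : softBellman r p γ polStar Qstar = Qstar)
    (hsoftmax : ∀ s a,
      polStar s a = Real.exp (Qstar (s, a)) / ∑ a' : A, Real.exp (Qstar (s, a'))) :
    ∀ pol : S → A → ℝ, (∀ s a, 0 ≤ pol s a) → (∀ s, ∑ a : A, pol s a = 1) →
      ∀ Qpol : S × A → ℝ, softBellman r p γ pol Qpol = Qpol →
        ∀ sa, Qpol sa ≤ Qstar sa :=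
  converged_soft_policy_optimal_general p hp0 hp1 r γ hγ0 hγ1 polStar Qstar hQstar hsoftmax
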